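/- Let d ≥ 1, let j ∈ {1,…,d}, let δ ∈ (0, 1/2), and let (Ω_n, P_n), n ≥ 1, be probability spaces. Let X_n : Ω_n → ℝ^d be random vectors and β_n ∈ ℝ^d. Suppose L, H, U are pairwise disjoint subsets of {1,…,d} whose union is {1,…,d}, with H nonempty and |U| < j ≤ |U| + |H|, such that: (i) for every coordinate k and every C > 0, lim_{n→∞} P_n(|X_n(k) − β_n(k)| ≥ C·n^{−δ}) = 0; (ii) for every k ∈ L and m ∈ H, n^δ·(β_n(m) − β_n(k)) → ∞; (iii) for every m ∈ H and k ∈ U, n^δ·(β_n(k) − β_n(m)) → ∞; and (iv) for every pair k, m ∈ H, √n·(β_n(k) − β_n(m)) → 0 (the near-tie condition). Let ĵ_n : Ω_n → {1,…,d} be measurable random indices such that almost surely #{k : X_n(k) > X_n(ĵ_n)} < j and #{k : X_n(k) ≥ X_n(ĵ_n)} ≥ j. Then for every coordinate k ∈ H and every C > 0, lim_{n→∞} P_n(|X_n(k) − X_n(ĵ_n)| ≥ C·n^{−δ}) = 0. -/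

import Mathlib

open MeasureTheory Filter Topology

/-!
On the event that every coordinate `X n k` lies within `ε_n = (C/4)·n^{-δ}` of its centre
`β n k`, the separation conditions force the coordinates indexed by `L`, `H`, `U` to be
ordered in blocks, so the counting condition on `ĵ_n` pins `ĵ_n` inside `H`. By the near-tie
condition all centres in `H` are then within `ε_n` of each other, so `|X n k - X n ĵ_n| < 3 ε_n`.
The complementary event is covered by finitely many events whose probabilities tend to zero.
-/

open Finset

section Rank

variable {ι α : Type*} [Fintype ι] [LinearOrder α]

def AttainsRank (x : ι → α) (j : ℕ) (i : ι) : Prop :=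
  #{k | x i < x k} < j ∧ j ≤ #{k | x i ≤ x k}

theorem AttainsRank.mem_of_blocks [DecidableEq ι] {x : ι → α} {j : ℕ} {i : ι}
    (hi : AttainsRank x j i) {L H U : Finset ι} (hunion : L ∪ H ∪ U = univ)
    (hHU : Disjoint H U) (hjU : #U < j) (hjUH : j ≤ #U + #H)
    (hlow : ∀ l ∈ L, ∀ m ∈ H ∪ U, x l < x m) (hhigh : ∀ m ∈ L ∪ H, ∀ u ∈ U, x m < x u) :
    i ∈ H := by
  have hmem : i ∈ L ∪ H ∪ U := hunion ▸ mem_univ i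
  rcases mem_union.1 hmem with hLH | hU
  · rcases mem_union.1 hLH with hL | hH
    · have hsub : H ∪ U ⊆ ({k | x i < x k} : Finset ι) := fun m hm =>
        mem_filter.2 ⟨mem_univ m, hlow i hL m hm⟩
      have := card_le_card hsub
      rw [card_union_of_disjoint hHU] at this
      exact absurd hi.1 (by omega)
    · exact hH
  · have hsub : ({k | x i ≤ x k} : Finset ι) ⊆ U := by
      intro k hk
      have hik : x i ≤ x k := (mem_filter.1 hk).2
      rcases mem_union.1 (hunion ▸ mem_univ k : k ∈ L ∪ H ∪ U) with hk' | hk'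
      · exact absurd (hhigh k hk' i hU) hik.not_gt
      · exact hk'
    exact absurd (hi.2.trans (card_le_card hsub)) (by omega)

end Rank

section Perturbation

variable {ι : Type*} {x b : ι → ℝ} {ε : ℝ}

theorem lt_of_abs_sub_lt_of_two_mul_lt (hclose : ∀ i, |x i - b i| < ε) {l m : ι}
    (hsep : 2 * ε < b m - b l) : x l < x m := by
  have hl := abs_lt.1 (hclose l)
  have hm := abs_lt.1 (hclose m)
  linarith

variable [Fintype ι] [DecidableEq ι]

theorem AttainsRank.abs_sub_lt_of_separated {j : ℕ} {i : ι} (hi : AttainsRank x j i)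
    {L H U : Finset ι} (hunion : L ∪ H ∪ U = univ) (hHU : Disjoint H U) (hHne : H.Nonempty)
    (hjU : #U < j) (hjUH : j ≤ #U + #H) (hclose : ∀ i, |x i - b i| < ε)
    (hsepLH : ∀ l ∈ L, ∀ m ∈ H, 2 * ε < b m - b l)
    (hsepHU : ∀ m ∈ H, ∀ u ∈ U, 2 * ε < b u - b m)
    (htie : ∀ a ∈ H, ∀ c ∈ H, |b a - b c| < ε) {k : ι} (hk : k ∈ H) :
    |x k - x i| < 3 * ε := by
  obtain ⟨m₀, hm₀⟩ := hHne
  have hsepLU : ∀ l ∈ L, ∀ u ∈ U, 2 * ε < b u - b l := fun l hl u hu => by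
    linarith [hsepLH l hl m₀ hm₀, hsepHU m₀ hm₀ u hu, (abs_nonneg _).trans_lt (hclose m₀)]
  have hiH : i ∈ H := by
    refine hi.mem_of_blocks hunion hHU hjU hjUH ?_ ?_
    · intro l hl m hm
      rcases mem_union.1 hm with hm | hm
      exacts [lt_of_abs_sub_lt_of_two_mul_lt hclose (hsepLH l hl m hm),
        lt_of_abs_sub_lt_of_two_mul_lt hclose (hsepLU l hl m hm)]
    · intro m hm u hu
      rcases mem_union.1 hm with hm | hm
      exacts [lt_of_abs_sub_lt_of_two_mul_lt hclose (hsepLU m hm u hu),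
        lt_of_abs_sub_lt_of_two_mul_lt hclose (hsepHU m hm u hu)]
  have hk' := abs_lt.1 (hclose k)
  have hi' := abs_lt.1 (hclose i)
  have hki := abs_lt.1 (htie k hk i hiH)
  exact abs_lt.2 ⟨by linarith, by linarith⟩

end Perturbation

section Asymptotics

theorem mul_rpow_neg_lt_iff {x : ℝ} (hx : 0 < x) (δ c a : ℝ) :
    c * x ^ (-δ) < a ↔ c < x ^ δ * a := by
  rw [Real.rpow_neg hx.le, ← div_eq_mul_inv, div_lt_iff₀ (by positivity), mul_comm]

theorem lt_mul_rpow_neg_iff {x : ℝ} (hx : 0 < x) (δ c a : ℝ) :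
    a < c * x ^ (-δ) ↔ x ^ δ * a < c := by
  rw [Real.rpow_neg hx.le, ← div_eq_mul_inv, lt_div_iff₀ (by positivity), mul_comm]

variable {a : ℕ → ℝ} {δ : ℝ}

theorem eventually_mul_rpow_neg_lt (h : Tendsto (fun n : ℕ => (n : ℝ) ^ δ * a n) atTop atTop)
    (c : ℝ) : ∀ᶠ n : ℕ in atTop, c * (n : ℝ) ^ (-δ) < a n := by
  filter_upwards [h.eventually_gt_atTop c, eventually_gt_atTop 0] with n hn hn0
  exact (mul_rpow_neg_lt_iff (Nat.cast_pos.2 hn0) δ c (a n)).2 hn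

theorem tendsto_rpow_mul_of_tendsto_sqrt_mul (hδ : δ < 1 / 2)
    (h : Tendsto (fun n : ℕ => √n * a n) atTop (𝓝 0)) :
    Tendsto (fun n : ℕ => (n : ℝ) ^ δ * a n) atTop (𝓝 0) := by
  have hpow : Tendsto (fun n : ℕ => (n : ℝ) ^ (δ - 1 / 2)) atTop (𝓝 0) := by
    have := (tendsto_rpow_neg_atTop (by linarith : 0 < 1 / 2 - δ)).comp
      (tendsto_natCast_atTop_atTop (R := ℝ))
    simpa [Function.comp_def, neg_sub] using this
  refine (zero_mul (0 : ℝ) ▸ hpow.mul h).congr' ?_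
  filter_upwards [eventually_gt_atTop 0] with n hn
  have hn0 : (0 : ℝ) < n := Nat.cast_pos.2 hn
  rw [Real.sqrt_eq_rpow, ← mul_assoc, ← Real.rpow_add hn0, sub_add_cancel]

theorem eventually_abs_lt_mul_rpow_neg (hδ : δ < 1 / 2)
    (h : Tendsto (fun n : ℕ => √n * a n) atTop (𝓝 0)) {c : ℝ} (hc : 0 < c) :
    ∀ᶠ n : ℕ in atTop, |a n| < c * (n : ℝ) ^ (-δ) := by
  have hsmall := (tendsto_rpow_mul_of_tendsto_sqrt_mul hδ h).abs.eventually
    (gt_mem_nhds (by rwa [abs_zero]))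
  filter_upwards [hsmall, eventually_gt_atTop 0] with n hn hn0
  have hpos : (0 : ℝ) < (n : ℝ) ^ δ := Real.rpow_pos_of_pos (Nat.cast_pos.2 hn0) δ
  rw [lt_mul_rpow_neg_iff (Nat.cast_pos.2 hn0), ← abs_of_pos hpos, ← abs_mul]
  exact hn

end Asymptotics

theorem tendsto_measure_zero_of_ae_subset_iUnion {α ι : Type*} [Fintype ι] {l : Filter α}
    {Ω : α → Type*} [∀ n, MeasurableSpace (Ω n)] {P : ∀ n, Measure (Ω n)}
    {A : ι → ∀ n, Set (Ω n)} {B : ∀ n, Set (Ω n)}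
    (hA : ∀ i, Tendsto (fun n => P n (A i n)) l (𝓝 0))
    (hB : ∀ᶠ n in l, B n ≤ᵐ[P n] ⋃ i, A i n) :
    Tendsto (fun n => P n (B n)) l (𝓝 0) := by
  have hsum : Tendsto (fun n => ∑ i, P n (A i n)) l (𝓝 0) := by
    simpa using tendsto_finsetSum univ fun i _ => hA i
  refine tendsto_of_tendsto_of_tendsto_of_le_of_le' tendsto_const_nhds hsum
    (Eventually.of_forall fun n => zero_le) ?_
  filter_upwards [hB] with n hn
  exact (measure_mono_ae hn).trans (measure_iUnion_fintype_le _ _)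

theorem coordinates_inside_near_tie_set_close_general
    (d : ℕ) (j : ℕ)
    (δ : ℝ) (hδ : δ ∈ Set.Ioo (0 : ℝ) (1/2))
    (Ω : ℕ → Type*) [∀ n, MeasurableSpace (Ω n)]
    (P : ∀ n, Measure (Ω n))
    (X : ∀ n, Ω n → Fin d → ℝ)
    (β : ℕ → Fin d → ℝ)
    (L H U : Finset (Fin d))
    (hHU : Disjoint H U)
    (hunion : L ∪ H ∪ U = Finset.univ) (hHne : H.Nonempty)
    (hjU : U.card < j) (hjUH : j ≤ U.card + H.card)
    (hcons : ∀ k : Fin d, ∀ C : ℝ, 0 < C →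
      Tendsto (fun n : ℕ => P n {ω | C * (n : ℝ) ^ (-δ) ≤ |X n ω k - β n k|})
        atTop (𝓝 0))
    (hsepLH : ∀ k ∈ L, ∀ m ∈ H,
      Tendsto (fun n : ℕ => (n : ℝ) ^ δ * (β n m - β n k)) atTop atTop)
    (hsepHU : ∀ m ∈ H, ∀ k ∈ U,
      Tendsto (fun n : ℕ => (n : ℝ) ^ δ * (β n k - β n m)) atTop atTop)
    (hneartie : ∀ k ∈ H, ∀ m ∈ H,
      Tendsto (fun n : ℕ => Real.sqrt n * (β n k - β n m)) atTop (𝓝 0))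
    (jhat : ∀ n, Ω n → Fin d)
    (hrank : ∀ n, ∀ᵐ ω ∂(P n),
      (Finset.univ.filter (fun k => X n ω (jhat n ω) < X n ω k)).card < j ∧
      j ≤ (Finset.univ.filter (fun k => X n ω (jhat n ω) ≤ X n ω k)).card) :
    ∀ k ∈ H, ∀ C : ℝ, 0 < C →
      Tendsto (fun n : ℕ =>
          P n {ω | C * (n : ℝ) ^ (-δ) ≤ |X n ω k - X n ω (jhat n ω)|})
        atTop (𝓝 0) := by
  intro k hk C hC
  refine tendsto_measure_zero_of_ae_subset_iUnion (fun i => hcons i (C / 4) (by positivity)) ?_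
  have hLH' := (eventually_all_finset L).2 fun l hl => (eventually_all_finset H).2 fun m hm =>
    eventually_mul_rpow_neg_lt (hsepLH l hl m hm) (C / 2)
  have hHU' := (eventually_all_finset H).2 fun m hm => (eventually_all_finset U).2 fun u hu =>
    eventually_mul_rpow_neg_lt (hsepHU m hm u hu) (C / 2)
  have htie := (eventually_all_finset H).2 fun a ha => (eventually_all_finset H).2 fun c hc =>
    eventually_abs_lt_mul_rpow_neg hδ.2 (hneartie a ha c hc) (by positivity : 0 < C / 4)
  filter_upwards [hLH', hHU', htie, eventually_gt_atTop 0] with n hLHn hHUn htien hn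
  have hCt : 0 < C * (n : ℝ) ^ (-δ) := by positivity
  filter_upwards [hrank n] with ω hω hbad
  by_contra hfar
  have hnear : ∀ i, |X n ω i - β n i| < C / 4 * (n : ℝ) ^ (-δ) := fun i =>
    not_le.1 fun h => hfar (Set.mem_iUnion.2 ⟨i, h⟩)
  have hclose := AttainsRank.abs_sub_lt_of_separated hω hunion hHU hHne hjU hjUH
    hnear (fun l hl m hm => by linarith [hLHn l hl m hm])
    (fun m hm u hu => by linarith [hHUn m hm u hu]) htien hk
  exact (show C * (n : ℝ) ^ (-δ) ≤ _ from hbad).not_gt (by linarith)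

/-- Under the setup of Statement 4 plus the near-tie condition on `H`,
coordinates inside `H` are within `C·n^{−δ}` of the observed `j`-th largest value,
with probability tending to one. -/
theorem coordinates_inside_near_tie_set_close
    (d : ℕ) (hd : 1 ≤ d) (j : ℕ) (hj : 1 ≤ j) (hjd : j ≤ d)
    (δ : ℝ) (hδ : δ ∈ Set.Ioo (0 : ℝ) (1/2))
    (Ω : ℕ → Type*) [∀ n, MeasurableSpace (Ω n)]
    (P : ∀ n, Measure (Ω n)) [∀ n, IsProbabilityMeasure (P n)]
    (X : ∀ n, Ω n → Fin d → ℝ) (hX : ∀ n, Measurable (X n))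
    (β : ℕ → Fin d → ℝ)
    (L H U : Finset (Fin d))
    (hLH : Disjoint L H) (hLU : Disjoint L U) (hHU : Disjoint H U)
    (hunion : L ∪ H ∪ U = Finset.univ) (hHne : H.Nonempty)
    (hjU : U.card < j) (hjUH : j ≤ U.card + H.card)
    (hcons : ∀ k : Fin d, ∀ C : ℝ, 0 < C →
      Tendsto (fun n : ℕ => P n {ω | C * (n : ℝ) ^ (-δ) ≤ |X n ω k - β n k|})
        atTop (𝓝 0))
    (hsepLH : ∀ k ∈ L, ∀ m ∈ H,
      Tendsto (fun n : ℕ => (n : ℝ) ^ δ * (β n m - β n k)) atTop atTop)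
    (hsepHU : ∀ m ∈ H, ∀ k ∈ U,
      Tendsto (fun n : ℕ => (n : ℝ) ^ δ * (β n k - β n m)) atTop atTop)
    (hneartie : ∀ k ∈ H, ∀ m ∈ H,
      Tendsto (fun n : ℕ => Real.sqrt n * (β n k - β n m)) atTop (𝓝 0))
    (jhat : ∀ n, Ω n → Fin d) (hjhat : ∀ n, Measurable (jhat n))
    (hrank : ∀ n, ∀ᵐ ω ∂(P n),
      (Finset.univ.filter (fun k => X n ω (jhat n ω) < X n ω k)).card < j ∧
      j ≤ (Finset.univ.filter (fun k => X n ω (jhat n ω) ≤ X n ω k)).card) :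
    ∀ k ∈ H, ∀ C : ℝ, 0 < C →
      Tendsto (fun n : ℕ =>
          P n {ω | C * (n : ℝ) ^ (-δ) ≤ |X n ω k - X n ω (jhat n ω)|})
        atTop (𝓝 0) :=
  coordinates_inside_near_tie_set_close_general d j δ hδ Ω P X β L H U hHU hunion hHne hjU hjUH
    hcons hsepLH hsepHU hneartie jhat hrank
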